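/- arXiv:2508.19853 — 2 statements merged into one kernel-verified Lean document; each statement's English description precedes it below -/
import Mathlib

section
/- Let C be a k×q real matrix, b ∈ ℝᵏ. If for every h ∈ ℝᵏ with h ≥ 0 and Cᵀh = 0 one has hᵀb ≥ 0, then there exists δ ∈ ℝ^q with Cδ ≥ −b componentwise. -/
/-!
Fourier–Motzkin elimination, by induction on the number of variables. Eliminating the first
variable amounts to multiplying the system `C δ + b ≥ 0` by a nonnegative matrix `M` that
annihilates the first column `a` of `C`. A certificate `h` against the eliminated system gives the
certificate `Mᵀ h` against the original one, so by induction the eliminated system has a solution.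
That solution extends: each row with `a i > 0` bounds the eliminated variable from below, each row
with `a j < 0` bounds it from above, and the rows of `M` pairing `i` with `j` say exactly that every
lower bound is below every upper bound.
-/

open Matrix Finset

theorem Finset.exists_between_of_forall_le {α ι κ : Type*} [Lattice α] [Nonempty α]
    {s : Finset ι} {t : Finset κ} {f : ι → α} {g : κ → α}
    (h : ∀ i ∈ s, ∀ j ∈ t, f i ≤ g j) : ∃ x, (∀ i ∈ s, f i ≤ x) ∧ ∀ j ∈ t, x ≤ g j := by
  classical
  rcases s.eq_empty_or_nonempty with rfl | hs
  · obtain ⟨x, hx⟩ := (t.image g).bddBelow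
    exact ⟨x, by simp, fun j hj => hx (mem_image_of_mem g hj)⟩
  · exact ⟨s.sup' hs f, fun i hi => le_sup' f hi, fun j hj => sup'_le hs f fun i hi => h i hi j hj⟩

theorem Matrix.mulVec_finCons {R ι : Type*} [CommSemiring R] {q : ℕ} (C : Matrix ι (Fin (q + 1)) R)
    (t : R) (δ : Fin q → R) : C *ᵥ Fin.cons t δ = C.submatrix id Fin.succ *ᵥ δ + t • Cᵀ 0 := by
  ext i
  simp [mulVec, dotProduct, Fin.sum_univ_succ, mul_comm, add_comm]

variable {𝕜 : Type*} [Field 𝕜] [LinearOrder 𝕜]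

section FourierMotzkin

variable {ι : Type*} [DecidableEq ι]

/-- Row `inl i` keeps constraint `i` if `a i = 0`; row `inr (i, j)` is, if `a i > 0 > a j`,
the positive combination of constraints `i` and `j` in which `a` cancels. -/
def fourierMotzkin (a : ι → 𝕜) : Matrix (ι ⊕ ι × ι) ι 𝕜 :=
  of <| Sum.elim (fun i => if a i = 0 then Pi.single i 1 else 0)
    fun p => if 0 < a p.1 ∧ a p.2 < 0 then Pi.single p.1 (-a p.2) + Pi.single p.2 (a p.1) else 0

theorem fourierMotzkin_nonneg [IsStrictOrderedRing 𝕜] (a : ι → 𝕜) (x : ι ⊕ ι × ι) (l : ι) :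
    0 ≤ fourierMotzkin a x l := by
  rcases x with i | ⟨i, j⟩ <;>
    simp only [fourierMotzkin, of_apply, Sum.elim_inl, Sum.elim_inr, ite_apply, Pi.add_apply,
      Pi.single_apply, Pi.zero_apply] <;>
    grind

variable [Fintype ι]

theorem fourierMotzkin_mulVec_inl (a r : ι → 𝕜) (i : ι) :
    (fourierMotzkin a *ᵥ r) (.inl i) = if a i = 0 then r i else 0 := by
  simp only [mulVec, fourierMotzkin, of_apply, Sum.elim_inl]
  split_ifs <;> simp

theorem fourierMotzkin_mulVec_inr (a r : ι → 𝕜) (i j : ι) :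
    (fourierMotzkin a *ᵥ r) (.inr (i, j)) =
      if 0 < a i ∧ a j < 0 then -a j * r i + a i * r j else 0 := by
  simp only [mulVec, fourierMotzkin, of_apply, Sum.elim_inr]
  split_ifs <;> simp [dotProduct, Pi.single_apply, add_mul, sum_add_distrib]

theorem fourierMotzkin_mulVec_self (a : ι → 𝕜) : fourierMotzkin a *ᵥ a = 0 := by
  ext (i | ⟨i, j⟩)
  · simp +contextual [fourierMotzkin_mulVec_inl]
  · simp [fourierMotzkin_mulVec_inr, mul_comm]

theorem exists_nonneg_add_smul_of_nonneg_fourierMotzkin_mulVec [IsStrictOrderedRing 𝕜]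
    {a r : ι → 𝕜} (h : 0 ≤ fourierMotzkin a *ᵥ r) : ∃ t : 𝕜, 0 ≤ r + t • a := by
  have hzero (i) (hi : a i = 0) : 0 ≤ r i := by
    simpa [fourierMotzkin_mulVec_inl, hi] using h (.inl i)
  have hlower_le_upper (i j) (hi : 0 < a i) (hj : a j < 0) : -r i / a i ≤ -r j / a j := by
    have := h (.inr (i, j))
    simp only [fourierMotzkin_mulVec_inr, if_pos (And.intro hi hj), Pi.zero_apply] at this
    rw [← neg_div_neg_eq (-r j), div_le_div_iff₀ hi (neg_pos.mpr hj)]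
    linarith
  obtain ⟨t, hlower, hupper⟩ := Finset.exists_between_of_forall_le
    (s := univ.filter (0 < a ·)) (t := univ.filter (a · < 0)) (f := fun i => -r i / a i)
    (g := fun i => -r i / a i)
    (fun i hi j hj => hlower_le_upper i j (by simpa using hi) (by simpa using hj))
  refine ⟨t, fun i => ?_⟩
  simp only [Pi.add_apply, Pi.smul_apply, smul_eq_mul, Pi.zero_apply]
  rcases lt_trichotomy (a i) 0 with hneg | hz | hpos
  · have := (le_div_iff_of_neg hneg).mp (hupper i (by simpa using hneg))
    linarith
  · simpa [hz] using hzero i hz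
  · have := (div_le_iff₀ hpos).mp (hlower i (by simpa using hpos))
    linarith

end FourierMotzkin

section NoFarkasCertificate

variable {ι σ : Type*} [Fintype ι]

def NoFarkasCertificate (C : Matrix ι σ 𝕜) (b : ι → 𝕜) : Prop :=
  ∀ h, 0 ≤ h → Cᵀ *ᵥ h = 0 → 0 ≤ h ⬝ᵥ b

theorem NoFarkasCertificate.nonneg [IsStrictOrderedRing 𝕜] [IsEmpty σ] {C : Matrix ι σ 𝕜}
    {b : ι → 𝕜} (hC : NoFarkasCertificate C b) : 0 ≤ b := by
  classical
  intro i
  simpa using hC (Pi.single i 1) (Pi.single_nonneg.mpr zero_le_one) (Subsingleton.elim _ _)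

theorem NoFarkasCertificate.mul_submatrix_succ [IsStrictOrderedRing 𝕜] {κ : Type*} [Fintype κ]
    {q : ℕ} {C : Matrix ι (Fin (q + 1)) 𝕜} {b : ι → 𝕜} (hC : NoFarkasCertificate C b)
    {M : Matrix κ ι 𝕜} (hM : ∀ x l, 0 ≤ M x l) (hMC : M *ᵥ Cᵀ 0 = 0) :
    NoFarkasCertificate (M * C.submatrix id Fin.succ) (M *ᵥ b) := by
  intro h hh hA
  rw [mulVec_transpose] at hA
  have hMh : 0 ≤ h ᵥ* M := fun l => sum_nonneg fun x _ => mul_nonneg (hh x) (hM x l)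
  have hker : Cᵀ *ᵥ (h ᵥ* M) = 0 := by
    rw [mulVec_transpose, vecMul_vecMul]
    ext j
    refine Fin.cases ?_ (fun j => ?_) j
    · exact (congrArg (h ⬝ᵥ ·) hMC).trans (dotProduct_zero h)
    · exact congrFun hA j
  rw [dotProduct_mulVec]
  exact hC _ hMh hker

theorem NoFarkasCertificate.exists_nonneg_mulVec_add [IsStrictOrderedRing 𝕜] {q : ℕ}
    {C : Matrix ι (Fin q) 𝕜} {b : ι → 𝕜} (hC : NoFarkasCertificate C b) :
    ∃ δ, 0 ≤ C *ᵥ δ + b := by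
  induction q generalizing ι with
  | zero => exact ⟨0, by simpa using hC.nonneg⟩
  | succ q ih =>
    classical
    obtain ⟨δ, hδ⟩ := ih (hC.mul_submatrix_succ (fourierMotzkin_nonneg _)
      (fourierMotzkin_mulVec_self _))
    rw [← mulVec_mulVec, ← mulVec_add] at hδ
    obtain ⟨t, ht⟩ := exists_nonneg_add_smul_of_nonneg_fourierMotzkin_mulVec hδ
    exact ⟨Fin.cons t δ, by rwa [mulVec_finCons, add_right_comm]⟩

end NoFarkasCertificate

theorem elimination_farkas_direction {k q : ℕ}
    (C : Matrix (Fin k) (Fin q) ℝ) (b : Fin k → ℝ)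
    (hfarkas : ∀ h : Fin k → ℝ, (∀ i, 0 ≤ h i) → Cᵀ *ᵥ h = 0 → 0 ≤ h ⬝ᵥ b) :
    ∃ δ : Fin q → ℝ, ∀ i, -b i ≤ (C *ᵥ δ) i := by
  obtain ⟨δ, hδ⟩ := NoFarkasCertificate.exists_nonneg_mulVec_add (C := C) (b := b) hfarkas
  exact ⟨δ, fun i => neg_le_iff_add_nonneg.mpr (hδ i)⟩
end

section
/- Let X ~ N(θ, 1) with θ ≤ 0, and let T = max(X, 0)². For α ∈ (0, 1/2) and any z ≥ 0, set β = 2αΦ(z) and let c_β = (Φ^{-1}(1 − β/2))² be the 1 − β quantile of χ²₁. Then P(T > c_β) = P(X > Φ^{-1}(1 − β/2)) ≤ β/2 = αΦ(z) ≤ α. -/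
open MeasureTheory ProbabilityTheory

/-- The standard normal CDF. -/
noncomputable def stdNormalCDF : ℝ → ℝ := fun x => cdf (gaussianReal 0 1) x

/-- The standard normal quantile function. -/
noncomputable def normalQuantile (p : ℝ) : ℝ :=
  sInf {x : ℝ | p ≤ stdNormalCDF x}

/-!
Shifting a Gaussian law to the right only enlarges its upper tails, so for `θ ≤ 0` and every `q`,
`P(X > q) ≤ 1 - Φ(q)`. Take `q = Φ⁻¹(1 - β/2)`. Since `0 < β/2 < 1/2 = Φ(0)`, we have `q ≥ 0`,
hence `{T > q²} = {X > q}`; and `Φ(q) = 1 - β/2` because `Φ` is continuous. So the size is at most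
`β/2 = αΦ(z) ≤ α`.
-/

open Set Filter Topology

section cdf

variable (μ : Measure ℝ)

theorem continuous_cdf [IsProbabilityMeasure μ] [NullSingletonClass μ] : Continuous (cdf μ) := by
  refine continuous_iff_continuousAt.2 fun x => ?_
  rw [(monotone_cdf μ).continuousAt_iff_leftLim_eq_rightLim, StieltjesFunction.rightLim_eq]
  have hjump : ENNReal.ofReal (cdf μ x - Function.leftLim (cdf μ) x) = 0 := by
    rw [← StieltjesFunction.measure_singleton, measure_cdf, measure_singleton]
  linarith [ENNReal.ofReal_eq_zero.1 hjump, (monotone_cdf μ).leftLim_le (le_refl x)]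

theorem measureReal_Ioi_eq_one_sub_cdf [IsProbabilityMeasure μ] (x : ℝ) : μ.real (Ioi x) = 1 - cdf μ x := by
  rw [← compl_Iic, probReal_compl_eq_one_sub measurableSet_Iic, cdf_eq_real]

variable {μ}

theorem setOf_le_cdf_nonempty {p : ℝ} (hp : p < 1) : {x | p ≤ cdf μ x}.Nonempty := by
  obtain ⟨x, hx⟩ := ((tendsto_cdf_atTop μ).eventually (eventually_gt_nhds hp)).exists
  exact ⟨x, hx.le⟩

theorem setOf_le_cdf_bddBelow {p : ℝ} (hp : 0 < p) : BddBelow {x | p ≤ cdf μ x} := by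
  obtain ⟨y, hy⟩ := eventually_atBot.1 ((tendsto_cdf_atBot μ).eventually (eventually_lt_nhds hp))
  exact ⟨y, fun x hx => le_of_not_gt fun hxy => (hy x hxy.le).not_ge hx⟩

theorem le_sInf_setOf_le_cdf {a p : ℝ} (ha : cdf μ a < p) (hp : p < 1) :
    a ≤ sInf {x | p ≤ cdf μ x} :=
  le_csInf (setOf_le_cdf_nonempty hp) fun _ hx =>
    le_of_not_gt fun hxa => (ha.trans_le hx).not_ge (monotone_cdf μ hxa.le)

theorem cdf_sInf_setOf_le_cdf (hμ : Continuous (cdf μ)) {p : ℝ} (hp0 : 0 < p) (hp1 : p < 1) :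
    cdf μ (sInf {x | p ≤ cdf μ x}) = p := by
  have hbdd := setOf_le_cdf_bddBelow (μ := μ) hp0
  have hmem : sInf {x | p ≤ cdf μ x} ∈ {x | p ≤ cdf μ x} :=
    (isClosed_le continuous_const hμ).csInf_mem (setOf_le_cdf_nonempty hp1) hbdd
  have hleft : ∀ᶠ x in 𝓝[<] sInf {x | p ≤ cdf μ x}, cdf μ x ≤ p :=
    eventually_nhdsWithin_of_forall fun x hx => (not_le.1 (notMem_of_lt_csInf (s := {x | p ≤ cdf μ x}) hx hbdd)).le
  exact le_antisymm (le_of_tendsto hμ.continuousWithinAt hleft) hmem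

end cdf

section gaussian

open scoped NNReal

theorem cdf_gaussianReal_pos (m : ℝ) {v : ℝ≥0} (hv : v ≠ 0) (z : ℝ) :
    0 < cdf (gaussianReal m v) z := by
  have hne : gaussianReal m v (Iic z) ≠ 0 := fun h => by
    simpa using gaussianReal_absolutelyContinuous' m hv h
  rw [cdf_eq_real]
  exact ENNReal.toReal_pos hne (measure_ne_top _ _)

theorem cdf_gaussianReal_zero_zero {v : ℝ≥0} (hv : v ≠ 0) : cdf (gaussianReal 0 v) 0 = 1 / 2 := by
  have := nullSingletonClass_gaussianReal (μ := 0) hv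
  have hsymm : (gaussianReal 0 v).real (Iic 0) = (gaussianReal 0 v).real (Ioi 0) :=
    calc (gaussianReal 0 v).real (Iic 0)
        = ((gaussianReal 0 v).map (fun x => -x)).real (Iic 0) := by
          rw [gaussianReal_map_neg, neg_zero]
      _ = (gaussianReal 0 v).real (Ici 0) := by
          rw [map_measureReal_apply measurable_neg measurableSet_Iic]
          congr 1
          ext x
          simp
      _ = (gaussianReal 0 v).real (Ioi 0) := measureReal_congr Ioi_ae_eq_Ici.symm
  rw [measureReal_Ioi_eq_one_sub_cdf, cdf_eq_real] at hsymm
  rw [cdf_eq_real]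
  linarith

theorem gaussianReal_Ioi_monotone (v : ℝ≥0) (q : ℝ) : Monotone fun m => gaussianReal m v (Ioi q) := by
  intro m m' hmm'
  have hshift : gaussianReal m' v = (gaussianReal m v).map (· + (m' - m)) := by
    rw [gaussianReal_map_add_const, add_sub_cancel]
  dsimp only
  rw [hshift, Measure.map_apply (measurable_add_const _) measurableSet_Ioi]
  exact measure_mono fun x (hx : q < x) => show q < x + (m' - m) by linarith

end gaussian

theorem stdNormalCDF_normalQuantile {p : ℝ} (hp0 : 0 < p) (hp1 : p < 1) :
    stdNormalCDF (normalQuantile p) = p :=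
  have := nullSingletonClass_gaussianReal (μ := 0) one_ne_zero
  cdf_sInf_setOf_le_cdf (continuous_cdf _) hp0 hp1

theorem normalQuantile_nonneg {p : ℝ} (hp0 : 1 / 2 < p) (hp1 : p < 1) : 0 ≤ normalQuantile p :=
  le_sInf_setOf_le_cdf (by rwa [cdf_gaussianReal_zero_zero one_ne_zero]) hp1

theorem toReal_prob_gt_le_one_sub_stdNormalCDF {Ω : Type*} [MeasurableSpace Ω] {P : Measure Ω}
    {X : Ω → ℝ} {θ : ℝ} (hθ : θ ≤ 0) (hX : Measurable X) (hXlaw : P.map X = gaussianReal θ 1)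
    (q : ℝ) : (P {ω | X ω > q}).toReal ≤ 1 - stdNormalCDF q :=
  calc (P {ω | X ω > q}).toReal = (gaussianReal θ 1 (Ioi q)).toReal := by
        rw [← hXlaw, Measure.map_apply hX measurableSet_Ioi]; rfl
    _ ≤ (gaussianReal 0 1 (Ioi q)).toReal :=
        ENNReal.toReal_mono (measure_ne_top _ _) (gaussianReal_Ioi_monotone 1 q hθ)
    _ = 1 - stdNormalCDF q := measureReal_Ioi_eq_one_sub_cdf _ q

theorem sq_lt_max_zero_sq_iff {q x : ℝ} (hq : 0 ≤ q) : q ^ 2 < max x 0 ^ 2 ↔ q < x := by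
  rw [pow_lt_pow_iff_left₀ hq (le_max_right _ _) two_ne_zero, lt_max_iff, or_iff_left hq.not_gt]

theorem rcc_one_active_size_calculation_general {Ω : Type*} [MeasureSpace Ω]
    (P : Measure Ω)
    (θ : ℝ) (hθ : θ ≤ 0)
    (X : Ω → ℝ) (hX : Measurable X)
    (hXlaw : Measure.map X P = gaussianReal θ 1)
    (T : Ω → ℝ) (hT : T = fun ω => max (X ω) 0 ^ 2)
    (α : ℝ) (hα : α ∈ Set.Ioo (0 : ℝ) (1 / 2)) (z : ℝ)
    (β : ℝ) (hβ : β = 2 * α * stdNormalCDF z)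
    (c : ℝ) (hc : c = (normalQuantile (1 - β / 2)) ^ 2) :
    (P {ω | T ω > c}).toReal = (P {ω | X ω > normalQuantile (1 - β / 2)}).toReal ∧
      (P {ω | X ω > normalQuantile (1 - β / 2)}).toReal ≤ β / 2 ∧
      β / 2 = α * stdNormalCDF z ∧
      α * stdNormalCDF z ≤ α := by
  obtain ⟨hα0, hα2⟩ := hα
  have hΦz_pos : 0 < stdNormalCDF z := cdf_gaussianReal_pos 0 one_ne_zero z
  have hΦz_le : stdNormalCDF z ≤ 1 := cdf_le_one _ z
  have hp_gt : 1 / 2 < 1 - β / 2 := by rw [hβ]; nlinarith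
  have hp_lt : 1 - β / 2 < 1 := by rw [hβ]; linarith [mul_pos hα0 hΦz_pos]
  have hq := normalQuantile_nonneg hp_gt hp_lt
  have hsets : {ω | T ω > c} = {ω | X ω > normalQuantile (1 - β / 2)} := by
    ext ω
    simp only [hT, hc, mem_ofPred_eq, gt_iff_lt, sq_lt_max_zero_sq_iff hq]
  refine ⟨by rw [hsets], ?_, by rw [hβ]; ring, mul_le_of_le_one_right hα0.le hΦz_le⟩
  calc _ ≤ 1 - stdNormalCDF (normalQuantile (1 - β / 2)) :=
        toReal_prob_gt_le_one_sub_stdNormalCDF hθ hX hXlaw _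
    _ = β / 2 := by rw [stdNormalCDF_normalQuantile (by linarith) hp_lt]; ring

theorem rcc_one_active_size_calculation {Ω : Type*} [MeasureSpace Ω]
    (P : Measure Ω) [IsProbabilityMeasure P]
    (θ : ℝ) (hθ : θ ≤ 0)
    (X : Ω → ℝ) (hX : Measurable X)
    (hXlaw : Measure.map X P = gaussianReal θ 1)
    (T : Ω → ℝ) (hT : T = fun ω => max (X ω) 0 ^ 2)
    (α : ℝ) (hα : α ∈ Set.Ioo (0 : ℝ) (1 / 2)) (z : ℝ) (hz : 0 ≤ z)
    (β : ℝ) (hβ : β = 2 * α * stdNormalCDF z)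
    (c : ℝ) (hc : c = (normalQuantile (1 - β / 2)) ^ 2) :
    (P {ω | T ω > c}).toReal = (P {ω | X ω > normalQuantile (1 - β / 2)}).toReal ∧
      (P {ω | X ω > normalQuantile (1 - β / 2)}).toReal ≤ β / 2 ∧
      β / 2 = α * stdNormalCDF z ∧
      α * stdNormalCDF z ≤ α :=
  rcc_one_active_size_calculation_general P θ hθ X hX hXlaw T hT α hα z β hβ c hc
end
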